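/- arXiv:1306.2612 — 2 statements merged into one kernel-verified Lean document; each statement's English description precedes it below -/
import Mathlib

section
/- Let S be a Hausdorff pseudocompact primitive topological inverse semigroup. Then every maximal subgroup of S is a pseudocompact subspace of S. -/
open Topology

/-- A (Hausdorff) topological space is *pseudocompact* if every locally finite
family of non-empty open subsets is finite. -/
def IsPseudocompact (X : Type*) [TopologicalSpace X] : Prop :=
  ∀ 𝒰 : Set (Set X), (∀ U ∈ 𝒰, IsOpen U ∧ U.Nonempty) →
    LocallyFinite (fun U : 𝒰 => (U : Set X)) → 𝒰.Finite

/-- `inv` witnesses that the semigroup `S` is an *inverse semigroup*: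
for every `x`, `inv x` is the unique `y` with `x*y*x = x` and `y*x*y = y`. -/
structure IsInverseSemigroup (S : Type*) [Mul S] (inv : S → S) : Prop where
  mul_inv_mul : ∀ x : S, x * inv x * x = x
  inv_mul_inv : ∀ x : S, inv x * x * inv x = inv x
  inv_unique : ∀ x y : S, x * y * x = x → y * x * y = y → y = inv x

/-- A semigroup with zero is *primitive* when every non-zero idempotent is
minimal among non-zero idempotents for the natural partial order
`f ≤ e ↔ f*e = e*f = f`. -/
def IsPrimitiveInverse (S : Type*) [Mul S] [Zero S] : Prop :=
  ∀ e f : S, IsIdempotentElem e → e ≠ 0 → IsIdempotentElem f → f ≠ 0 →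
    f * e = f → e * f = f → f = e

/-- A subset `H` of a semigroup is a *subgroup* if it is closed under
multiplication and is a group under the induced operation. -/
def IsSubgroupSet (S : Type*) [Mul S] (H : Set S) : Prop :=
  H.Nonempty ∧ (∀ a ∈ H, ∀ b ∈ H, a * b ∈ H) ∧
    ∃ e ∈ H, (∀ a ∈ H, e * a = a ∧ a * e = a) ∧ ∀ a ∈ H, ∃ b ∈ H, a * b = e ∧ b * a = e

/-- A *maximal subgroup* of a semigroup: a subgroup not properly contained in
any other subgroup. -/
def IsMaximalSubgroup (S : Type*) [Mul S] (H : Set S) : Prop :=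
  IsSubgroupSet S H ∧ ∀ K : Set S, IsSubgroupSet S K → H ⊆ K → K = H

/-! ### Auxiliary topological lemmas -/

theorem pc_of_surj {X Y : Type*} [TopologicalSpace X] [TopologicalSpace Y]
    {f : X → Y} (hf : Continuous f) (hsurj : Function.Surjective f)
    (hX : IsPseudocompact X) : IsPseudocompact Y := by
  intro 𝒰 hU hLF
  set 𝒱 : Set (Set X) := (fun U => f ⁻¹' U) '' 𝒰 with h𝒱
  have h1 : ∀ V ∈ 𝒱, IsOpen V ∧ V.Nonempty := by
    rintro V ⟨U, hU', rfl⟩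
    exact ⟨(hU U hU').1.preimage hf, (hsurj.nonempty_preimage).mpr (hU U hU').2⟩
  have h2 : LocallyFinite (fun V : 𝒱 => (V : Set X)) := by
    intro x
    obtain ⟨N, hN, hfin⟩ := hLF (f x)
    refine ⟨f ⁻¹' N, hf.continuousAt.preimage_mem_nhds hN, ?_⟩
    have hsub : Subtype.val '' {V : 𝒱 | ((V : Set X) ∩ f ⁻¹' N).Nonempty}
        ⊆ (fun U => f ⁻¹' U) '' (Subtype.val '' {U : 𝒰 | ((U : Set Y) ∩ N).Nonempty}) := by
      rintro _ ⟨⟨V, hV⟩, hmeet, rfl⟩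
      obtain ⟨U, hU', rfl⟩ := hV
      refine ⟨U, ⟨⟨U, hU'⟩, ?_, rfl⟩, rfl⟩
      obtain ⟨z, hz1, hz2⟩ := hmeet
      exact ⟨f z, hz1, hz2⟩
    exact Set.Finite.of_finite_image
      (((hfin.image Subtype.val).image _).subset hsub) Subtype.val_injective.injOn
  have h3 : 𝒱.Finite := hX 𝒱 h1 h2
  exact Set.Finite.of_finite_image (h𝒱 ▸ h3) (Set.preimage_injective.mpr hsurj).injOn

theorem pc_of_compact {X : Type*} [TopologicalSpace X] [CompactSpace X] :
    IsPseudocompact X := fun _𝒰 hU hLF =>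
  Set.finite_coe_iff.mp (Set.finite_univ_iff.mp (hLF.finite_of_compact (fun U => (hU U U.2).2)))

theorem pc_clopen {Y : Type*} [TopologicalSpace Y] {C : Set Y} (hC : IsClopen C)
    (hY : IsPseudocompact Y) : IsPseudocompact ↥C := by
  intro 𝒰 hU hLF
  set g : Set ↥C → Set Y := fun U => Subtype.val '' U with hg
  have hginj : Function.Injective g := Set.image_injective.mpr Subtype.val_injective
  have h1 : ∀ V ∈ g '' 𝒰, IsOpen V ∧ V.Nonempty := by
    rintro V ⟨U, hU', rfl⟩
    exact ⟨hC.isOpen.isOpenMap_subtype_val U (hU U hU').1, (hU U hU').2.image _⟩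
  have h2 : LocallyFinite (fun V : (g '' 𝒰) => (V : Set Y)) := by
    intro y
    by_cases hy : y ∈ C
    · obtain ⟨N, hN, hfin⟩ := hLF ⟨y, hy⟩
      obtain ⟨M, hM, hMN⟩ := mem_nhds_subtype C ⟨y, hy⟩ N |>.mp hN
      refine ⟨M ∩ C, Filter.inter_mem hM (hC.isOpen.mem_nhds hy), ?_⟩
      have hsub : Subtype.val '' {V : (g '' 𝒰) | ((V : Set Y) ∩ (M ∩ C)).Nonempty}
          ⊆ g '' (Subtype.val '' {U : 𝒰 | ((U : Set ↥C) ∩ N).Nonempty}) := by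
        rintro _ ⟨⟨V, hV⟩, hmeet, rfl⟩
        obtain ⟨U, hU', rfl⟩ := hV
        refine ⟨U, ⟨⟨U, hU'⟩, ?_, rfl⟩, rfl⟩
        obtain ⟨z, ⟨u, hu, rfl⟩, hz2, hz3⟩ := hmeet
        exact ⟨u, hu, hMN hz2⟩
      exact Set.Finite.of_finite_image
        (((hfin.image Subtype.val).image g).subset hsub) Subtype.val_injective.injOn
    · refine ⟨Cᶜ, hC.isClosed.isOpen_compl.mem_nhds hy, ?_⟩
      convert Set.finite_empty
      ext ⟨V, hV⟩
      simp only [Set.mem_setOf_eq, Set.mem_empty_iff_false, iff_false]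
      rintro ⟨z, hz1, hz2⟩
      obtain ⟨U, hU', rfl⟩ := hV
      obtain ⟨u, hu, rfl⟩ := hz1
      exact hz2 u.2
  exact Set.Finite.of_finite_image (hY (g '' 𝒰) h1 h2) hginj.injOn

/-! ### Auxiliary algebraic lemmas on inverse semigroups -/

namespace IsInverseSemigroup
variable {S : Type*} [Semigroup S] {inv : S → S} (h : IsInverseSemigroup S inv)
include h

theorem inv_inv' (x : S) : inv (inv x) = x :=
  (h.inv_unique (inv x) x (h.inv_mul_inv x) (h.mul_inv_mul x)).symm

theorem inv_idem {g : S} (hg : g * g = g) : inv g = g :=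
  (h.inv_unique g g (by rw [hg, hg]) (by rw [hg, hg])).symm

theorem prod_idem {e f : S} (he : e * e = e) (hf : f * f = f) :
    (e * f) * (e * f) = e * f := by
  set g := inv (e * f) with hgdef
  have hef : (e * f) * g * (e * f) = e * f := h.mul_inv_mul (e * f)
  have hgg : g * (e * f) * g = g := h.inv_mul_inv (e * f)
  have h1 : (e * f) * (f * g * e) * (e * f) = e * f := by
    have : (e * f) * (f * g * e) * (e * f) = e * (f * f) * g * (e * e) * f := by
      simp only [mul_assoc]
    rw [this, hf, he]
    rw [← mul_assoc] at hef
    exact hef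
  have h2 : (f * g * e) * (e * f) * (f * g * e) = f * g * e := by
    have : (f * g * e) * (e * f) * (f * g * e) =
        f * (g * ((e * e) * (f * f) * g)) * e := by simp only [mul_assoc]
    rw [this, he, hf]
    have : g * (e * f * g) = g * (e * f) * g := by simp only [mul_assoc]
    rw [this, hgg]
  have h3 : f * g * e = g := h.inv_unique (e * f) (f * g * e) h1 h2
  have h4 : g * g = g := by
    have e1 : f * g * e * (f * g * e) = f * g * e := by
      have : f * g * e * (f * g * e) = f * (g * (e * f) * g) * e := by
        simp only [mul_assoc]
      rw [this, hgg]
    calc g * g = (f * g * e) * (f * g * e) := by rw [h3]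
      _ = f * g * e := e1
      _ = g := h3
  have h5 : e * f = g := by
    conv_lhs => rw [← h.inv_inv' (e * f)]
    exact h.inv_idem h4
  rw [h5]; exact h4

theorem idem_comm {e f : S} (he : e * e = e) (hf : f * f = f) :
    e * f = f * e := by
  have hef := h.prod_idem he hf
  have hfe := h.prod_idem hf he
  have a1 : (e * f) * (f * e) * (e * f) = e * f := by
    have : (e * f) * (f * e) * (e * f) = e * (f * f) * ((e * e) * f) := by
      simp only [mul_assoc]
    rw [this, hf, he]
    exact hef
  have a2 : (f * e) * (e * f) * (f * e) = f * e := by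
    have : (f * e) * (e * f) * (f * e) = f * (e * e) * ((f * f) * e) := by
      simp only [mul_assoc]
    rw [this, he, hf]
    exact hfe
  calc e * f = inv (e * f) := (h.inv_idem hef).symm
    _ = f * e := (h.inv_unique (e * f) (f * e) a1 a2).symm

end IsInverseSemigroup

/-- Let `S` be a Hausdorff pseudocompact primitive topological
inverse semigroup. Then every maximal subgroup of `S` is a pseudocompact
subspace of `S`. -/
theorem maximalSubgroup_pseudocompact_of_pseudocompact_primitive
    {S : Type*} [SemigroupWithZero S] [TopologicalSpace S] [T2Space S]
    (continuous_mul : Continuous fun p : S × S => p.1 * p.2)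
    (inv : S → S) (hinv : IsInverseSemigroup S inv) (hinvc : Continuous inv)
    (hnt : Nontrivial S) (hprim : IsPrimitiveInverse S)
    (hpc : IsPseudocompact S) :
    ∀ H : Set S, IsMaximalSubgroup S H → IsPseudocompact ↥H := by
  intro H hH
  obtain ⟨⟨hne, hmul, e, heH, hid, hinvex⟩, hmax⟩ := hH
  have he : e * e = e := (hid e heH).1
  by_cases he0 : e = 0
  · -- the trivial group {0}
    have hH0 : H = {(0 : S)} := by
      apply Set.eq_singleton_iff_unique_mem.mpr
      refine ⟨he0 ▸ heH, fun a ha => ?_⟩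
      rw [← (hid a ha).1, he0, zero_mul]
    have : CompactSpace ↥H := by
      rw [hH0]; exact isCompact_iff_compactSpace.mp isCompact_singleton
    exact pc_of_compact
  · -- e is a nonzero idempotent
    have hmem : ∀ a ∈ H, a * inv a = e ∧ inv a * a = e := by
      intro a ha
      obtain ⟨b, hbH, hab, hba⟩ := hinvex a ha
      have hb : b = inv a := hinv.inv_unique a b
        (by rw [hab]; exact (hid a ha).1) (by rw [hba]; exact (hid b hbH).1)
      rw [← hb]
      exact ⟨hab, hba⟩
    set He : Set S := {x | x * inv x = e ∧ inv x * x = e} with hHedef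
    have hHsub : H ⊆ He := fun a ha => hmem a ha
    have heHe : e ∈ He := by
      constructor <;> rw [hinv.inv_idem he] <;> exact he
    have hx_e : ∀ x ∈ He, e * x = x ∧ x * e = x := by
      intro x hx
      constructor
      · conv_lhs => rw [← hx.1]
        exact hinv.mul_inv_mul x
      · conv_lhs => rw [← hx.2, ← mul_assoc]
        exact hinv.mul_inv_mul x
    have hinvHe : ∀ x ∈ He, inv x ∈ He := fun x hx =>
      ⟨by rw [hinv.inv_inv']; exact hx.2, by rw [hinv.inv_inv']; exact hx.1⟩
    have hmulHe : ∀ x ∈ He, ∀ y ∈ He, x * y ∈ He := by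
      intro x hx y hy
      have hinvxy : inv (x * y) = inv y * inv x := by
        refine (hinv.inv_unique (x * y) (inv y * inv x) ?_ ?_).symm
        · have : (x * y) * (inv y * inv x) * (x * y)
              = x * (y * inv y) * ((inv x * x) * y) := by simp only [mul_assoc]
          rw [this, hy.1, hx.2, (hx_e x hx).2, (hx_e y hy).1]
        · have : (inv y * inv x) * (x * y) * (inv y * inv x)
              = inv y * (inv x * x) * ((y * inv y) * inv x) := by simp only [mul_assoc]
          rw [this, hx.2, hy.1, (hx_e (inv y) (hinvHe y hy)).2,
            (hx_e (inv x) (hinvHe x hx)).1]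
      constructor
      · rw [hinvxy]
        have : x * y * (inv y * inv x) = x * (y * inv y) * inv x := by
          simp only [mul_assoc]
        rw [this, hy.1, (hx_e x hx).2]
        exact hx.1
      · rw [hinvxy]
        have : inv y * inv x * (x * y) = inv y * (inv x * x) * y := by
          simp only [mul_assoc]
        rw [this, hx.2, (hx_e (inv y) (hinvHe y hy)).2]
        exact hy.2
    have hHe_sub : IsSubgroupSet S He :=
      ⟨⟨e, heHe⟩, hmulHe, e, heHe, hx_e,
        fun a ha => ⟨inv a, hinvHe a ha, ha.1, ha.2⟩⟩
    have hHeH : He = H := hmax He hHe_sub hHsub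
    have h0H : (0 : S) ∉ H := by
      intro h0
      obtain ⟨b, hbH, h0b, _⟩ := hinvex 0 h0
      exact he0 (by rw [← h0b, zero_mul])
    have hmxc : Continuous fun x : S => x * inv x :=
      continuous_mul.comp (continuous_id.prodMk hinvc)
    have hmxc2 : Continuous fun x : S => inv x * x :=
      continuous_mul.comp (hinvc.prodMk continuous_id)
    have hHclosed : IsClosed H := by
      rw [← hHeH]
      have hsetEq : He = (fun x : S => x * inv x) ⁻¹' {e} ∩
          (fun x : S => inv x * x) ⁻¹' {e} := by
        ext x
        simp only [hHedef, Set.mem_setOf_eq, Set.mem_inter_iff, Set.mem_preimage,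
          Set.mem_singleton_iff]
      rw [hsetEq]
      exact (isClosed_singleton.preimage hmxc).inter (isClosed_singleton.preimage hmxc2)
    set X : Set S := insert (0 : S) H with hXdef
    have hr_mem : ∀ x : S, e * x * e ∈ X := by
      intro x
      set y := e * x * e with hy
      have hey : e * y = y := by rw [hy, ← mul_assoc, ← mul_assoc, he]
      have hye : y * e = y := by rw [hy, mul_assoc, he]
      set p := y * inv y with hp
      set q := inv y * y with hq
      have hpp : p * p = p := by
        rw [hp, ← mul_assoc, hinv.mul_inv_mul]
      have hqq : q * q = q := by
        rw [hq, ← mul_assoc, hinv.inv_mul_inv]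
      have hep : e * p = p := by rw [hp, ← mul_assoc, hey]
      have hqe : q * e = q := by rw [hq, mul_assoc, hye]
      have hpe : p * e = p := by rw [hinv.idem_comm hpp he]; exact hep
      have heq : e * q = q := by rw [hinv.idem_comm he hqq]; exact hqe
      by_cases hp0 : p = 0
      · have hy0 : y = 0 := by
          have := hinv.mul_inv_mul y
          rw [← this, ← hp, hp0, zero_mul]
        exact Or.inl hy0
      by_cases hq0 : q = 0
      · have hy0 : y = 0 := by
          have h' : y * (inv y * y) = y := by
            rw [← mul_assoc]; exact hinv.mul_inv_mul y
          rw [← h', ← hq, hq0, mul_zero]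
        exact Or.inl hy0
      · have hpE : p = e := hprim e p he he0 hpp hp0 hpe hep
        have hqE : q = e := hprim e q he he0 hqq hq0 hqe heq
        refine Or.inr ?_
        rw [← hHeH]
        exact ⟨by rw [← hp]; exact hpE, by rw [← hq]; exact hqE⟩
    have hrc : Continuous fun x : S => e * x * e :=
      continuous_mul.comp ((continuous_mul.comp
        (continuous_const.prodMk continuous_id)).prodMk continuous_const)
    have hr_id : ∀ x ∈ X, e * x * e = x := by
      rintro x (rfl | hxH)
      · rw [mul_zero, zero_mul]
      · rw [(hid x hxH).1, (hid x hxH).2]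
    have hpcX : IsPseudocompact ↥X :=
      pc_of_surj (f := fun x : S => (⟨e * x * e, hr_mem x⟩ : ↥X))
        (hrc.subtype_mk _) (fun z => ⟨z.1, Subtype.ext (hr_id z.1 z.2)⟩) hpc
    set C : Set ↥X := Subtype.val ⁻¹' H with hCdef
    have hCeq : C = Subtype.val ⁻¹' ({(0 : S)}ᶜ) := by
      ext z
      simp only [hCdef, Set.mem_preimage, Set.mem_compl_iff, Set.mem_singleton_iff]
      constructor
      · intro hz h0
        exact h0H (h0 ▸ hz)
      · intro hz
        rcases z.2 with h' | h'
        · exact absurd h' hz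
        · exact h'
    have hCclopen : IsClopen C := by
      constructor
      · exact hHclosed.preimage continuous_subtype_val
      · rw [hCeq]
        exact isClosed_singleton.isOpen_compl.preimage continuous_subtype_val
    have hpcC : IsPseudocompact ↥C := pc_clopen hCclopen hpcX
    exact pc_of_surj (f := fun z : ↥C => (⟨z.1.1, z.2⟩ : ↥H))
      (Continuous.subtype_mk (continuous_subtype_val.comp continuous_subtype_val) _)
      (fun a => ⟨⟨⟨a.1, Set.mem_insert_of_mem _ a.2⟩, a.2⟩, rfl⟩) hpcC
end

section
/- Let S be a primitive Hausdorff pseudocompact topological inverse semigroup, topologically isomorphic to the orthogonal sum ∑_{i∈I} B_{λ_i}(G_i) of topological Brandt λ_i-extensions of topological groups G_i. Then the space S is normal if and only if for every i ∈ I the underlying space of the topological group G_i is normal. -/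
open Topology

/-- The orthogonal sum of the family of Brandt extensions `B_{λ i}(G i)`:
the set `{0} ∪ ⋃ i, (λ i × G i × λ i)`. -/
abbrev OrthSum (I : Type*) (ι : I → Type*) (G : I → Type*) : Type _ :=
  Option (Σ i : I, ι i × G i × ι i)

instance (I : Type*) (ι : I → Type*) (G : I → Type*) : Zero (OrthSum I ι G) :=
  ⟨(none : Option (Σ i : I, ι i × G i × ι i))⟩

/-- The non-zero element `(α, g, β)` of the summand `B_{λ i}(G i)`. -/
def OrthSum.elem {I : Type*} {ι : I → Type*} {G : I → Type*}
    (i : I) (α : ι i) (g : G i) (β : ι i) : OrthSum I ι G :=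
  some ⟨i, (α, g, β)⟩

open Classical in
/-- Multiplication of the orthogonal sum: products are computed inside the
summand `B_{λ i}(G i)` when both factors lie in it, and are `0` otherwise. -/
noncomputable instance (I : Type*) (ι : I → Type*) (G : I → Type*) [∀ i, Mul (G i)] :
    Mul (OrthSum I ι G) :=
  ⟨fun x y =>
    match x, y with
    | some ⟨i, (α, a, β)⟩, some ⟨j, (γ, b, δ)⟩ =>
        if h : i = j then
          (if cast (congrArg ι h) β = γ then
            (some ⟨j, (cast (congrArg ι h) α, (cast (congrArg G h) a) * b, δ)⟩ :
              Option (Σ i : I, ι i × G i × ι i))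
          else none)
        else none
    | _, _ => none⟩

/-- A witness that the topological semigroup `S` with zero is topologically
isomorphic to the orthogonal sum of a family of topological Brandt
`λ i`-extensions `B_{λ i}(G i)` of topological groups `G i` (in the category of
topological inverse semigroups): an isomorphism of semigroups with zero which
is a homeomorphism, such that each subset `(G i)_{α,β}` of `S` carries the
topology of the group `G i`. -/
structure TopBrandtDecomposition (S : Type*) [Mul S] [Zero S] [TopologicalSpace S] where
  I : Type*
  ι : I → Type*
  G : I → Type*
  [instNonempty : ∀ i, Nonempty (ι i)]
  [instGroup : ∀ i, Group (G i)]
  [instTopG : ∀ i, TopologicalSpace (G i)]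
  [instTopGrpG : ∀ i, IsTopologicalGroup (G i)]
  [instTopSum : TopologicalSpace (OrthSum I ι G)]
  e : S ≃ₜ OrthSum I ι G
  map_mul : ∀ x y : S, e (x * y) = e x * e y
  map_zero : e 0 = 0
  embed : ∀ (i : I) (α β : ι i),
    Topology.IsEmbedding fun g : G i => e.symm (OrthSum.elem i α g β)


open Set Filter Function

/-!
The cells `(G i)_{α,β}` are clopen copies of the groups `G i` partitioning `S \ {0}`, so
everything hinges on the neighbourhoods of `0`. Take an open `N ∋ 0` with `N N⁻¹ ⊆ W`. By
pseudocompactness only finitely many cells fail to lie in `closure N`; and if the cells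
`(α, β)` and `(γ, β)` both lie in `closure N`, then every `x` in the cell `(α, γ)` can be written
as `(x y) y⁻¹` with `y, x y ∈ N`, so the cell `(α, γ)` lies in `W`. Thus `W` contains all but
finitely many cells and `0` has a base of clopen neighbourhoods, whose complements are finite
unions of cells. Disjoint closed sets can then be separated cell by cell.
-/

namespace OrthSum

variable {I : Type*} {ι : I → Type*} {G : I → Type*}

@[elab_as_elim]
theorem induction {motive : OrthSum I ι G → Prop} (zero : motive 0)
    (elem : ∀ i α g β, motive (elem i α g β)) (t : OrthSum I ι G) : motive t := by
  rcases t with _ | ⟨i, α, g, β⟩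
  exacts [zero, elem i α g β]

theorem elem_ne_zero {i : I} {α β : ι i} {g : G i} : (elem i α g β : OrthSum I ι G) ≠ 0 :=
  Option.some_ne_none _

section Mul

variable [∀ i, Mul (G i)]

noncomputable instance : MulZeroClass (OrthSum I ι G) where
  zero_mul _ := rfl
  mul_zero t := by cases t <;> rfl

theorem elem_mul_elem_of_ne {i j : I} (hij : i ≠ j) (α β : ι i) (a : G i) (γ δ : ι j) (b : G j) :
    (elem i α a β * elem j γ b δ : OrthSum I ι G) = 0 :=
  dif_neg hij

theorem elem_mul_elem_of_ne_index {i : I} {β γ : ι i} (h : β ≠ γ) (α δ : ι i) (a b : G i) :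
    (elem i α a β * elem i γ b δ : OrthSum I ι G) = 0 := by
  classical
  exact (dif_pos rfl).trans (if_neg h)

theorem elem_mul_elem (i : I) (α β δ : ι i) (a b : G i) :
    (elem i α a β * elem i β b δ : OrthSum I ι G) = elem i α (a * b) δ := by
  classical
  exact (dif_pos rfl).trans (if_pos rfl)

end Mul

instance [∀ i, Inv (G i)] : Inv (OrthSum I ι G) :=
  ⟨Option.map fun x => ⟨x.1, (x.2.2.2, x.2.2.1⁻¹, x.2.1)⟩⟩

theorem inv_elem [∀ i, Inv (G i)] (i : I) (α β : ι i) (g : G i) :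
    (elem i α g β : OrthSum I ι G)⁻¹ = elem i β g⁻¹ α :=
  rfl

def cell (j : Σ i, ι i × ι i) : Set (OrthSum I ι G) :=
  range fun g : G j.1 => elem j.1 j.2.1 g j.2.2

theorem elem_mem_cell_iff {i : I} {α β : ι i} {g : G i} {j : Σ i, ι i × ι i} :
    (elem i α g β : OrthSum I ι G) ∈ cell j ↔ j = ⟨i, (α, β)⟩ := by
  rcases j with ⟨j, γ, δ⟩
  simp only [cell, elem, mem_range, Option.some.injEq, Sigma.mk.injEq]
  constructor
  · rintro ⟨g', rfl, h⟩
    simp_all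
  · rintro ⟨rfl, h⟩
    simp_all

theorem pairwise_disjoint_cell : Pairwise (Disjoint on (cell : _ → Set (OrthSum I ι G))) := by
  intro j j' hjj'
  refine disjoint_left.mpr ?_
  rintro _ ⟨g, rfl⟩ h
  exact hjj' (elem_mem_cell_iff.mp h).symm

theorem iUnion_cell : ⋃ j, cell j = ({0}ᶜ : Set (OrthSum I ι G)) := by
  ext t
  induction t using OrthSum.induction with
  | zero =>
    refine iff_of_false ?_ (by simp)
    rintro ⟨_, ⟨j, rfl⟩, _, hg⟩
    exact elem_ne_zero hg
  | elem i α g β =>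
    exact iff_of_true (mem_iUnion.mpr ⟨_, elem_mem_cell_iff.mpr rfl⟩) elem_ne_zero

section Group

variable [∀ i, Group (G i)]

theorem mul_inv_mul (t : OrthSum I ι G) : t * t⁻¹ * t = t := by
  induction t using OrthSum.induction with
  | zero => rfl
  | elem i α g β => rw [inv_elem, elem_mul_elem, elem_mul_elem, mul_inv_cancel, one_mul]

theorem inv_mul_inv (t : OrthSum I ι G) : t⁻¹ * t * t⁻¹ = t⁻¹ := by
  induction t using OrthSum.induction with
  | zero => rfl
  | elem i α g β => rw [inv_elem, elem_mul_elem, elem_mul_elem, inv_mul_cancel, one_mul]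

theorem mem_cell_of_mul_mul_ne_zero {i : I} {α β : ι i} {t : OrthSum I ι G}
    (h : elem i α 1 α * t * elem i β 1 β ≠ 0) : t ∈ cell ⟨i, (α, β)⟩ := by
  induction t using OrthSum.induction with
  | zero => simp at h
  | elem j γ g δ =>
    by_cases hij : i = j
    · subst hij
      by_cases hαγ : α = γ
      · subst hαγ
        by_cases hδβ : δ = β
        · subst hδβ
          exact ⟨g, rfl⟩
        · rw [elem_mul_elem, elem_mul_elem_of_ne_index hδβ] at h
          exact absurd rfl h
      · rw [elem_mul_elem_of_ne_index hαγ, zero_mul] at h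
        exact absurd rfl h
    · rw [elem_mul_elem_of_ne hij, zero_mul] at h
      exact absurd rfl h

theorem cell_eq_setOf_mul_mul_ne_zero (i : I) (α β : ι i) :
    cell ⟨i, (α, β)⟩ = {t : OrthSum I ι G | elem i α 1 α * t * elem i β 1 β ≠ 0} := by
  refine subset_antisymm ?_ fun t => mem_cell_of_mul_mul_ne_zero
  rintro _ ⟨g, rfl⟩
  simpa [elem_mul_elem] using elem_ne_zero

theorem cell_eq_setOf_mul_mul_eq (i : I) (α β : ι i) :
    cell ⟨i, (α, β)⟩ = {t : OrthSum I ι G |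
      elem i α 1 α * t * elem i β 1 β = t ∧ t⁻¹ * t = elem i β 1 β} := by
  refine subset_antisymm ?_ fun t ⟨hfix, hidem⟩ => mem_cell_of_mul_mul_ne_zero ?_
  · rintro _ ⟨g, rfl⟩
    simp [inv_elem, elem_mul_elem]
  · rw [hfix]
    rintro rfl
    exact elem_ne_zero hidem.symm

end Group

end OrthSum

section Pseudocompact

variable {X Y J : Type*} [TopologicalSpace X] [TopologicalSpace Y]

theorem IsPseudocompact.finite_of_locallyFinite (hX : IsPseudocompact X) {f : J → Set X}
    (hf : LocallyFinite f) (hopen : ∀ j, IsOpen (f j)) (hne : ∀ j, (f j).Nonempty)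
    (hinj : Injective f) : Finite J := by
  have hrange : (range f).Finite :=
    hX _ (by rintro _ ⟨j, rfl⟩; exact ⟨hopen j, hne j⟩) hf.on_range
  exact (Set.finite_range_iff hinj).mp hrange

theorem Homeomorph.isPseudocompact (e : X ≃ₜ Y) (hX : IsPseudocompact X) : IsPseudocompact Y := by
  intro 𝒰 h𝒰 hlf
  have : Finite 𝒰 :=
    hX.finite_of_locallyFinite (f := fun U : 𝒰 => e ⁻¹' U) (hlf.preimage_continuous e.continuous)
      (fun U => ((h𝒰 U U.2).1.preimage e.continuous))
      (fun U => ((h𝒰 U U.2).2.preimage e.surjective))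
      ((preimage_injective.mpr e.surjective).comp Subtype.val_injective)
  exact Set.toFinite 𝒰

end Pseudocompact

section PunctuatedPartition

variable {X J : Type*} [TopologicalSpace X] {C : J → Set X} {p : X}

theorem IsPseudocompact.finite_setOf_not_subset_closure (hX : IsPseudocompact X)
    (hopen : ∀ j, IsOpen (C j)) (hdisj : Pairwise (Disjoint on C))
    (hcover : ⋃ j, C j = {p}ᶜ) {N : Set X} (hN : N ∈ 𝓝 p) :
    {j | ¬ C j ⊆ closure N}.Finite := by
  let f : {j | ¬ C j ⊆ closure N} → Set X := fun j => C j \ closure N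
  have hne : ∀ j, (f j).Nonempty := fun j => sdiff_nonempty.mpr j.2
  have hlf : LocallyFinite f := by
    intro x
    by_cases hx : x = p
    · exact ⟨N, hx ▸ hN, finite_empty.subset fun j ⟨y, hyf, hyN⟩ => hyf.2 (subset_closure hyN)⟩
    · obtain ⟨j₀, hxj₀⟩ := mem_iUnion.mp (hcover ▸ hx : x ∈ ⋃ j, C j)
      refine ⟨C j₀, (hopen j₀).mem_nhds hxj₀, Subsingleton.finite ?_⟩
      rintro j ⟨y, hyf, hyC⟩ j' ⟨y', hyf', hyC'⟩
      have h₁ : (j : J) = j₀ := hdisj.eq (not_disjoint_iff.mpr ⟨y, hyf.1, hyC⟩)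
      have h₂ : (j' : J) = j₀ := hdisj.eq (not_disjoint_iff.mpr ⟨y', hyf'.1, hyC'⟩)
      exact Subtype.ext (h₁.trans h₂.symm)
  have hinj : Injective f := fun j j' hjj' =>
    Subtype.ext <| hdisj.eq <| not_disjoint_iff.mpr <|
      let ⟨y, hy⟩ := hne j; ⟨y, hy.1, (hjj' ▸ hy : y ∈ f j').1⟩
  have := hX.finite_of_locallyFinite hlf (fun j => (hopen j).sdiff isClosed_closure) hne hinj
  exact Set.toFinite _

theorem exists_isClopen_mem_subset (hopen : ∀ j, IsOpen (C j)) (hclosed : ∀ j, IsClosed (C j))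
    (hcover : ⋃ j, C j = {p}ᶜ) {W : Set X} (hpW : p ∈ W) (hW : {j | ¬ C j ⊆ W}.Finite) :
    ∃ N, IsClopen N ∧ p ∈ N ∧ N ⊆ W := by
  refine ⟨(⋃ j ∈ {j | ¬ C j ⊆ W}, C j)ᶜ,
    ⟨isOpen_biUnion (fun j _ => hopen j) |>.isClosed_compl,
      (hW.isClosed_biUnion fun j _ => hclosed j).isOpen_compl⟩, ?_, ?_⟩
  · simp only [mem_compl_iff, mem_iUnion₂, not_exists]
    intro j _ hpj
    exact (hcover.subset (mem_iUnion_of_mem j hpj) : p ∈ ({p}ᶜ : Set X)) rfl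
  · intro x hxN
    by_contra hxW
    obtain ⟨j, hxj⟩ := mem_iUnion.mp (hcover ▸ (ne_of_mem_of_not_mem hpW hxW).symm : x ∈ ⋃ j, C j)
    exact hxN (mem_biUnion (fun h => hxW (h hxj)) hxj)

theorem IsOpen.separatedNhds_inter {O : Set X} (hO : IsOpen O) [NormalSpace O] {A B : Set X}
    (hA : IsClosed A) (hB : IsClosed B) (hAB : Disjoint A B) :
    SeparatedNhds (A ∩ O) (B ∩ O) := by
  obtain ⟨U, V, hU, hV, hAU, hBV, hUV⟩ := normal_separation (X := O)
    (hA.preimage continuous_subtype_val) (hB.preimage continuous_subtype_val)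
    (hAB.preimage Subtype.val)
  exact ⟨_, _, hO.isOpenMap_subtype_val U hU, hO.isOpenMap_subtype_val V hV,
    fun x hx => ⟨⟨x, hx.2⟩, hAU hx.1, rfl⟩, fun x hx => ⟨⟨x, hx.2⟩, hBV hx.1, rfl⟩,
    (disjoint_image_iff Subtype.val_injective).mpr hUV⟩

theorem separatedNhds_of_subset_isClopen (hopen : ∀ j, IsOpen (C j))
    (hdisj : Pairwise (Disjoint on C)) [∀ j, NormalSpace (C j)]
    {A B K : Set X} (hA : IsClosed A) (hB : IsClosed B) (hAB : Disjoint A B)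
    (hK : IsClopen K) (hBK : B ⊆ K) (hKC : K ⊆ ⋃ j, C j) : SeparatedNhds A B := by
  have hsep : ∀ j, SeparatedNhds ((A ∪ Kᶜ) ∩ C j) (B ∩ C j) := fun j =>
    (hopen j).separatedNhds_inter (hA.union hK.isOpen.isClosed_compl) hB
      (disjoint_union_left.mpr ⟨hAB, (disjoint_compl_left.mono_right hBK)⟩)
  choose U V hU hV hAU hBV hUV using hsep
  refine ⟨Kᶜ ∪ ⋃ j, U j ∩ C j, ⋃ j, V j ∩ C j,
    hK.isClosed.isOpen_compl.union (isOpen_iUnion fun j => (hU j).inter (hopen j)),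
    isOpen_iUnion fun j => (hV j).inter (hopen j), ?_, ?_, ?_⟩
  · intro x hxA
    by_cases hxK : x ∈ K
    · obtain ⟨j, hxj⟩ := mem_iUnion.mp (hKC hxK)
      exact Or.inr (mem_iUnion.mpr ⟨j, hAU j ⟨Or.inl hxA, hxj⟩, hxj⟩)
    · exact Or.inl hxK
  · intro x hxB
    obtain ⟨j, hxj⟩ := mem_iUnion.mp (hKC (hBK hxB))
    exact mem_iUnion.mpr ⟨j, hBV j ⟨hxB, hxj⟩, hxj⟩
  · refine disjoint_union_left.mpr ⟨disjoint_iUnion_right.mpr fun j => ?_,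
      disjoint_iUnion_left.mpr fun j => disjoint_iUnion_right.mpr fun j' => ?_⟩
    · exact disjoint_left.mpr fun x hxK hxVC =>
        disjoint_left.mp (hUV j) (hAU j ⟨Or.inr hxK, hxVC.2⟩) hxVC.1
    · rcases eq_or_ne j j' with rfl | hjj'
      · exact (hUV j).mono inter_subset_left inter_subset_left
      · exact (hdisj hjj').mono inter_subset_right inter_subset_right

theorem normalSpace_of_finite_setOf_not_subset (hopen : ∀ j, IsOpen (C j))
    (hclosed : ∀ j, IsClosed (C j)) (hdisj : Pairwise (Disjoint on C))
    (hcover : ⋃ j, C j = {p}ᶜ) [∀ j, NormalSpace (C j)]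
    (hfin : ∀ W ∈ 𝓝 p, {j | ¬ C j ⊆ W}.Finite) : NormalSpace X := by
  have key : ∀ A B, IsClosed A → IsClosed B → Disjoint A B → p ∉ B → SeparatedNhds A B := by
    intro A B hA hB hAB hpB
    obtain ⟨N, hN, hpN, hNB⟩ :=
      exists_isClopen_mem_subset hopen hclosed hcover hpB (hfin _ (hB.isOpen_compl.mem_nhds hpB))
    refine separatedNhds_of_subset_isClopen hopen hdisj hA hB hAB hN.compl
      (subset_compl_comm.mp hNB) ?_
    rw [hcover]
    exact compl_subset_compl.mpr (singleton_subset_iff.mpr hpN)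
  refine ⟨fun A B hA hB hAB => ?_⟩
  by_cases hpB : p ∈ B
  · exact (key B A hB hA hAB.symm (disjoint_right.mp hAB hpB)).symm
  · exact key A B hA hB hAB hpB

end PunctuatedPartition

theorem Set.Finite.setOf_forall_mem_or_mem {I : Type*} {ι : I → Type*}
    {B : Set (Σ i, ι i × ι i)} (hB : B.Finite) :
    {j : Σ i, ι i × ι i | ∀ β, ⟨j.1, (j.2.1, β)⟩ ∈ B ∨ ⟨j.1, (j.2.2, β)⟩ ∈ B}.Finite := by
  have hrow : ∀ i (α : ι i), {β | ⟨i, (α, β)⟩ ∈ B}.Finite := fun i α =>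
    hB.preimage ((sigma_mk_injective (i := i)).comp (Prod.mk_right_injective α)).injOn
  refine (((hB.image Sigma.fst).inter_of_left {i | Finite (ι i)}).biUnion
    fun i hi => have : Finite (ι i) := hi.2; finite_range (Sigma.mk i)).subset ?_
  rintro ⟨i, α, γ⟩ hj
  have hfin : Finite (ι i) := finite_univ_iff.mp <|
    ((hrow i α).union (hrow i γ)).subset fun β _ => hj β
  have hi : i ∈ Sigma.fst '' B := by
    rcases hj α with h | h
    exacts [⟨_, h, rfl⟩, ⟨_, h, rfl⟩]
  exact mem_biUnion (x := i) ⟨hi, hfin⟩ ⟨(α, γ), rfl⟩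

namespace OrthSum

variable {I : Type*} {ι : I → Type*} {G : I → Type*} [∀ i, Group (G i)]
  [TopologicalSpace (OrthSum I ι G)] [ContinuousMul (OrthSum I ι G)]

theorem isOpen_cell [T1Space (OrthSum I ι G)] (j : Σ i, ι i × ι i) :
    IsOpen (cell j : Set (OrthSum I ι G)) := by
  obtain ⟨i, α, β⟩ := j
  rw [cell_eq_setOf_mul_mul_ne_zero]
  exact isOpen_compl_singleton.preimage ((continuous_const.mul continuous_id).mul continuous_const)

theorem isClosed_cell [ContinuousInv (OrthSum I ι G)] [T2Space (OrthSum I ι G)]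
    (j : Σ i, ι i × ι i) : IsClosed (cell j : Set (OrthSum I ι G)) := by
  obtain ⟨i, α, β⟩ := j
  rw [cell_eq_setOf_mul_mul_eq]
  exact (isClosed_eq ((continuous_const.mul continuous_id).mul continuous_const)
    continuous_id).inter (isClosed_eq (continuous_inv.mul continuous_id) continuous_const)

theorem cell_subset_image2_of_subset_closure [T1Space (OrthSum I ι G)]
    {N : Set (OrthSum I ι G)} (hN : IsOpen N) {i : I} {α β γ : ι i}
    (hαβ : cell ⟨i, (α, β)⟩ ⊆ closure N) (hγβ : cell ⟨i, (γ, β)⟩ ⊆ closure N) :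
    cell ⟨i, (α, γ)⟩ ⊆ image2 (fun x y => x * y⁻¹) N N := by
  rintro _ ⟨g, rfl⟩
  obtain ⟨_, ⟨b, rfl⟩, hbN⟩ := mem_closure_iff.mp (hαβ ⟨1, rfl⟩) _ (isOpen_cell _) ⟨1, rfl⟩
  set O := {y | elem i α g γ * y ∈ N} ∩ cell ⟨i, (γ, β)⟩
  have hO : IsOpen O := (hN.preimage (continuous_const.mul continuous_id)).inter (isOpen_cell _)
  have hbO : elem i γ (g⁻¹ * b) β ∈ O :=
    ⟨show elem i α g γ * _ ∈ N by rwa [elem_mul_elem, mul_inv_cancel_left], ⟨_, rfl⟩⟩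
  obtain ⟨_, ⟨hgcN, c, rfl⟩, hcN⟩ := mem_closure_iff.mp (hγβ hbO.2) O hO hbO
  exact ⟨_, hgcN, _, hcN, by simp only [inv_elem, elem_mul_elem, mul_inv_cancel_right]⟩

theorem finite_setOf_not_cell_subset [ContinuousInv (OrthSum I ι G)] [T1Space (OrthSum I ι G)]
    (hpc : IsPseudocompact (OrthSum I ι G)) {W : Set (OrthSum I ι G)} (hW : W ∈ 𝓝 0) :
    {j | ¬ cell j ⊆ W}.Finite := by
  obtain ⟨N, hN, h0N, hNW⟩ : ∃ N : Set (OrthSum I ι G), IsOpen N ∧ 0 ∈ N ∧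
      image2 (fun x y => x * y⁻¹) N N ⊆ W := by
    have hcont : Tendsto (fun q : OrthSum I ι G × OrthSum I ι G => q.1 * q.2⁻¹)
        (𝓝 0 ×ˢ 𝓝 0) (𝓝 0) := by
      rw [← nhds_prod_eq]
      exact (continuous_fst.mul continuous_snd.inv).tendsto' (0, 0) 0
        (zero_mul (0 : OrthSum I ι G)⁻¹)
    obtain ⟨t, ht, htW⟩ := Filter.mem_prod_self_iff.mp (hcont hW)
    exact ⟨interior t, isOpen_interior, mem_interior_iff_mem_nhds.mpr ht,
      image2_subset_iff.mpr fun x hx y hy =>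
        htW (mk_mem_prod (interior_subset hx) (interior_subset hy))⟩
  have hbad : {j | ¬ cell j ⊆ closure N}.Finite :=
    hpc.finite_setOf_not_subset_closure isOpen_cell pairwise_disjoint_cell iUnion_cell
      (hN.mem_nhds h0N)
  refine hbad.setOf_forall_mem_or_mem.subset ?_
  rintro ⟨i, α, γ⟩ hj β
  by_contra! h
  exact absurd ((cell_subset_image2_of_subset_closure hN (not_not.mp h.1) (not_not.mp h.2)).trans
    hNW) hj

theorem normalSpace_iff [∀ i, Nonempty (ι i)] [∀ i, TopologicalSpace (G i)]
    [ContinuousInv (OrthSum I ι G)] [T2Space (OrthSum I ι G)]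
    (hpc : IsPseudocompact (OrthSum I ι G))
    (hemb : ∀ i (α β : ι i), IsEmbedding fun g : G i => (elem i α g β : OrthSum I ι G)) :
    NormalSpace (OrthSum I ι G) ↔ ∀ i, NormalSpace (G i) := by
  refine ⟨fun _ i => ?_, fun _ => ?_⟩
  · obtain ⟨α⟩ := ‹∀ i, Nonempty (ι i)› i
    exact IsClosedEmbedding.normalSpace ⟨hemb i α α, isClosed_cell ⟨i, (α, α)⟩⟩
  · have (j : Σ i, ι i × ι i) : NormalSpace (cell j : Set (OrthSum I ι G)) :=
      (hemb j.1 j.2.1 j.2.2).toHomeomorph.normalSpace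
    exact normalSpace_of_finite_setOf_not_subset isOpen_cell isClosed_cell pairwise_disjoint_cell
      iUnion_cell fun W hW => finite_setOf_not_cell_subset hpc hW

end OrthSum

theorem IsInverseSemigroup.map_inv {S T : Type*} [Mul S] [Mul T] [Inv T] {inv : S → S}
    (hinv : IsInverseSemigroup S inv) (f : S ≃* T) (h₁ : ∀ t : T, t * t⁻¹ * t = t)
    (h₂ : ∀ t : T, t⁻¹ * t * t⁻¹ = t⁻¹) (x : S) : f (inv x) = (f x)⁻¹ := by
  have := hinv.inv_unique x (f.symm (f x)⁻¹) (f.injective (by simp [h₁]))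
    (f.injective (by simp [h₂]))
  rw [← this, f.apply_symm_apply]

theorem normal_iff_groups_normal_general
    {S : Type*} [SemigroupWithZero S] [TopologicalSpace S] [T2Space S]
    (continuous_mul : Continuous fun p : S × S => p.1 * p.2)
    (inv : S → S) (hinv : IsInverseSemigroup S inv) (hinvc : Continuous inv)
    (hpc : IsPseudocompact S)
    (d : TopBrandtDecomposition S) :
    NormalSpace S ↔ ∀ i : d.I, @NormalSpace (d.G i) (d.instTopG i) := by
  obtain ⟨I, ι, G, e, hmul, -, hembed⟩ := d
  let f : S ≃* OrthSum I ι G := { e.toEquiv with map_mul' := hmul }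
  have he_inv (x : S) : e (inv x) = (e x)⁻¹ :=
    hinv.map_inv f OrthSum.mul_inv_mul OrthSum.inv_mul_inv x
  have : ContinuousMul (OrthSum I ι G) := ⟨by
    convert e.continuous.comp (continuous_mul.comp (e.symm.continuous.prodMap e.symm.continuous))
    simp [hmul]⟩
  have : ContinuousInv (OrthSum I ι G) := ⟨by
    convert e.continuous.comp (hinvc.comp e.symm.continuous)
    simp [he_inv]⟩
  have : T2Space (OrthSum I ι G) := e.t2Space
  have hemb (i : I) (α β : ι i) :
      IsEmbedding fun g : G i => (OrthSum.elem i α g β : OrthSum I ι G) := by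
    simpa [Function.comp_def] using e.isEmbedding.comp (hembed i α β)
  rw [← OrthSum.normalSpace_iff (e.isPseudocompact hpc) hemb]
  exact ⟨fun _ => e.normalSpace, fun _ => e.symm.normalSpace⟩

/-- Let `S` be a primitive Hausdorff pseudocompact
topological inverse semigroup, topologically isomorphic to the orthogonal sum
of topological Brandt `λ i`-extensions of topological groups `G i`. Then `S`
is a normal space iff for every `i` the space of the topological group `G i`
is normal. -/
theorem normal_iff_groups_normal
    {S : Type*} [SemigroupWithZero S] [TopologicalSpace S] [T2Space S]
    (continuous_mul : Continuous fun p : S × S => p.1 * p.2)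
    (inv : S → S) (hinv : IsInverseSemigroup S inv) (hinvc : Continuous inv)
    (hnt : Nontrivial S) (hprim : IsPrimitiveInverse S)
    (hpc : IsPseudocompact S)
    (d : TopBrandtDecomposition S) :
    NormalSpace S ↔ ∀ i : d.I, @NormalSpace (d.G i) (d.instTopG i) :=
  normal_iff_groups_normal_general continuous_mul inv hinv hinvc hpc d
end
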